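/- F is a continuously differentiable probability distribution function, i.e. F is C¹, nondecreasing, with limit 0 at -∞ and limit 1 at +∞. -/

import Mathlib

/-!
`F` is the restriction to `ℝ` of `complexF z = eᶻ/(eᶻ - 1) - 1/z`, and
`complexF z = 1 - ((eᶻ - 1 - z)/z²) / ((eᶻ - 1)/z) → 1 - (1/2)/1 = 1/2` as `z → 0`, so `0` is a
removable singularity and `F` is real analytic. Monotonicity comes from
`F' x = 1/x² - eˣ/(eˣ - 1)²`, which is nonnegative because `eˣ - 1 = 2 e^{x/2} sinh (x/2)` and
`|sinh y| ≥ |y|`. The limits at `±∞` are read off from `eˣ/(eˣ - 1) = 1/(1 - e⁻ˣ)`.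
-/

open Real Filter MeasureTheory

noncomputable def F : ℝ → ℝ := fun x =>
  if x = 0 then 1/2 else Real.exp x / (Real.exp x - 1) - 1/x

open Topology

namespace Complex

lemma tendsto_exp_sub_one_div : Tendsto (fun z : ℂ => (exp z - 1) / z) (𝓝[≠] 0) (𝓝 1) := by
  simpa [div_eq_inv_mul] using hasDerivAt_iff_tendsto_slope_zero.1 (hasDerivAt_exp 0)

lemma tendsto_exp_sub_one_sub_id_div_sq :
    Tendsto (fun z : ℂ => (exp z - 1 - z) / z ^ 2) (𝓝[≠] 0) (𝓝 (1 / 2)) := by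
  have h := ((exp_sub_sum_range_succ_isLittleO_pow 2).tendsto_div_nhds_zero.mono_left
    (nhdsWithin_le_nhds (s := {0}ᶜ))).add_const (1 / 2 : ℂ)
  rw [zero_add] at h
  refine h.congr' (eventually_nhdsWithin_of_forall fun z (hz : z ≠ 0) => ?_)
  simp only [Finset.sum_range_succ, Finset.sum_range_zero]
  field_simp
  norm_num
  ring

lemma eventually_exp_ne_one : ∀ᶠ z in 𝓝[≠] (0 : ℂ), exp z ≠ 1 := by
  simpa using (hasDerivAt_exp 0).eventually_ne (exp_ne_zero 0)

end Complex

lemma Real.exp_sub_one_ne_zero {x : ℝ} (hx : x ≠ 0) : exp x - 1 ≠ 0 :=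
  sub_ne_zero.2 ((exp_eq_one_iff x).not.2 hx)

lemma Real.sq_le_sinh_sq (x : ℝ) : x ^ 2 ≤ sinh x ^ 2 := by
  rw [← sq_abs, ← sq_abs (sinh x), abs_sinh]
  gcongr
  exact self_le_sinh_iff.2 (abs_nonneg x)

lemma Real.sq_mul_exp_le_exp_sub_one_sq (x : ℝ) : x ^ 2 * exp x ≤ (exp x - 1) ^ 2 := by
  have hexp : exp x = exp (x / 2) ^ 2 := by rw [← exp_nat_mul]; ring_nf
  have hsinh : exp x - 1 = 2 * exp (x / 2) * sinh (x / 2) := by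
    rw [sinh_eq, hexp, exp_neg]
    field_simp
  calc x ^ 2 * exp x = 4 * exp (x / 2) ^ 2 * (x / 2) ^ 2 := by rw [hexp]; ring
    _ ≤ 4 * exp (x / 2) ^ 2 * sinh (x / 2) ^ 2 := by
      gcongr _ * ?_
      exact sq_le_sinh_sq _
    _ = (exp x - 1) ^ 2 := by rw [hsinh]; ring

theorem monotone_of_deriv_nonneg_of_ne {f : ℝ → ℝ} (hf : Differentiable ℝ f) {a : ℝ}
    (ha : ContinuousAt (deriv f) a) (h : ∀ x ≠ a, 0 ≤ deriv f x) : Monotone f := by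
  refine monotone_of_deriv_nonneg hf fun x => ?_
  rcases eq_or_ne x a with rfl | hx
  · exact ge_of_tendsto (ha.mono_left nhdsWithin_le_nhds)
      (eventually_nhdsWithin_of_forall (s := {x}ᶜ) h)
  · exact h x hx

section

open Complex

noncomputable def complexF (z : ℂ) : ℂ :=
  if z = 0 then 1 / 2 else exp z / (exp z - 1) - 1 / z

lemma ofReal_F (x : ℝ) : (F x : ℂ) = complexF x := by
  by_cases hx : x = 0 <;> simp [F, complexF, hx]

lemma complexF_eq_one_sub_div {z : ℂ} (hz : z ≠ 0) (h : exp z ≠ 1) :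
    complexF z = 1 - (exp z - 1 - z) / z ^ 2 / ((exp z - 1) / z) := by
  have : exp z - 1 ≠ 0 := sub_ne_zero.2 h
  rw [complexF, if_neg hz]
  field_simp
  ring

lemma tendsto_complexF_zero : Tendsto complexF (𝓝[≠] 0) (𝓝 (1 / 2)) := by
  have h := (tendsto_exp_sub_one_sub_id_div_sq.div tendsto_exp_sub_one_div one_ne_zero).const_sub 1
  rw [div_one, show (1 : ℂ) - 1 / 2 = 1 / 2 by norm_num] at h
  refine h.congr' ?_
  filter_upwards [self_mem_nhdsWithin, eventually_exp_ne_one] with z hz h1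
  exact (complexF_eq_one_sub_div hz h1).symm

lemma differentiableAt_complexF {z : ℂ} (h : exp z ≠ 1) : DifferentiableAt ℂ complexF z := by
  have hz : z ≠ 0 := by rintro rfl; simp at h
  have hF : complexF =ᶠ[𝓝 z] fun w => exp w / (exp w - 1) - 1 / w := by
    filter_upwards [eventually_ne_nhds hz] with w hw using if_neg hw
  refine DifferentiableAt.congr_of_eventuallyEq ?_ hF
  exact (differentiableAt_exp.div (differentiableAt_exp.sub_const 1) (sub_ne_zero.2 h)).sub
    ((differentiableAt_const 1).div differentiableAt_id hz)

lemma analyticAt_complexF_zero : AnalyticAt ℂ complexF 0 := by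
  refine analyticAt_of_differentiable_on_punctured_nhds_of_continuousAt
    (eventually_exp_ne_one.mono fun z => differentiableAt_complexF) ?_
  simpa [continuousAt_iff_punctured_nhds, complexF] using tendsto_complexF_zero

lemma analyticAt_complexF_of_exp_ne_one {z : ℂ} (h : exp z ≠ 1) : AnalyticAt ℂ complexF z :=
  analyticAt_iff_eventually_differentiableAt.2 <|
    (continuous_exp.continuousAt.eventually_ne h).mono fun _ => differentiableAt_complexF

end

open Complex in
theorem contDiff_F {n : WithTop ℕ∞} : ContDiff ℝ n F := by
  have hF : F = fun x : ℝ => (complexF x).re := funext fun x => by rw [← ofReal_F, ofReal_re]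
  rw [hF, contDiff_iff_contDiffAt]
  intro x
  refine ContDiffAt.real_of_complex (AnalyticAt.contDiffAt ?_)
  rcases eq_or_ne x 0 with rfl | hx
  · simpa using analyticAt_complexF_zero
  · exact analyticAt_complexF_of_exp_ne_one (by exact_mod_cast (Real.exp_eq_one_iff x).not.2 hx)

lemma hasDerivAt_F {x : ℝ} (hx : x ≠ 0) :
    HasDerivAt F (1 / x ^ 2 - exp x / (exp x - 1) ^ 2) x := by
  have hE := exp_sub_one_ne_zero hx
  have hF : F =ᶠ[𝓝 x] fun y => exp y / (exp y - 1) - y⁻¹ := by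
    filter_upwards [eventually_ne_nhds hx] with y hy
    simp [F, hy]
  have h : HasDerivAt (fun y => exp y / (exp y - 1) - y⁻¹) _ x :=
    ((hasDerivAt_exp x).div ((hasDerivAt_exp x).sub_const 1) hE).sub (hasDerivAt_inv hx)
  refine (h.congr_deriv ?_).congr_of_eventuallyEq hF
  field_simp
  ring

lemma deriv_F_nonneg {x : ℝ} (hx : x ≠ 0) : 0 ≤ deriv F x := by
  have hE := exp_sub_one_ne_zero hx
  rw [(hasDerivAt_F hx).deriv, sub_nonneg, div_le_div_iff₀ (by positivity) (by positivity)]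
  linarith [sq_mul_exp_le_exp_sub_one_sq x]

lemma tendsto_F_atBot : Tendsto F atBot (𝓝 0) := by
  have h := (tendsto_exp_atBot.div (tendsto_exp_atBot.sub_const 1) (by norm_num)).sub
    tendsto_inv_atBot_zero
  rw [zero_div, sub_zero] at h
  refine h.congr' ?_
  filter_upwards [eventually_lt_atBot 0] with x hx
  simp [F, hx.ne]

lemma tendsto_F_atTop : Tendsto F atTop (𝓝 1) := by
  have h := ((tendsto_exp_neg_atTop_nhds_zero.const_sub 1).inv₀ (by norm_num)).sub
    tendsto_inv_atTop_zero
  rw [sub_zero, sub_zero, inv_one] at h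
  refine h.congr' ?_
  filter_upwards [eventually_gt_atTop 0] with x hx
  have hE := exp_sub_one_ne_zero hx.ne'
  simp only [F, if_neg hx.ne', exp_neg, one_div]
  field_simp

theorem F_is_C1_distribution_function :
    ContDiff ℝ 1 F ∧ Monotone F ∧
    Tendsto F atBot (nhds 0) ∧ Tendsto F atTop (nhds 1) := by
  have hF : ContDiff ℝ 1 F := contDiff_F
  refine ⟨hF, ?_, tendsto_F_atBot, tendsto_F_atTop⟩
  exact monotone_of_deriv_nonneg_of_ne (hF.differentiable one_ne_zero)
    (hF.continuous_deriv le_rfl).continuousAt fun _ => deriv_F_nonneg
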